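/- arXiv:2210.06241 — 2 statements merged into one kernel-verified Lean document; each statement's English description precedes it below -/
import Mathlib

section
/- If there exists a binary self-orthogonal [45, 5, 22] code, then for every integer m ≥ 1 there exists a binary self-orthogonal [31m + 14, 5, 16m + 6] code; combined with the Griesmer bound, d_{so}(31m + 14, 5) = d(31m + 14, 5) = 16m + 6 for all m ≥ 1. -/
/-- A binary linear code is self-orthogonal if all pairs of codewords have zero
inner product over `F_2`. -/
def IsSO {n : ℕ} (C : Submodule (ZMod 2) (Fin n → ZMod 2)) : Prop :=
  ∀ x ∈ C, ∀ y ∈ C, ∑ i, x i * y i = 0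

/-- `C` has minimum distance exactly `d`. -/
def IsMinDist {n : ℕ} (C : Submodule (ZMod 2) (Fin n → ZMod 2)) (d : ℕ) : Prop :=
  (∃ x ∈ C, x ≠ 0 ∧ hammingNorm x = d) ∧ ∀ x ∈ C, x ≠ 0 → d ≤ hammingNorm x

/-- `d(n,k)`: the largest minimum distance among binary `[n,k]` linear codes. -/
noncomputable def dLin (n k : ℕ) : ℕ :=
  sSup {d | ∃ C : Submodule (ZMod 2) (Fin n → ZMod 2),
    Module.finrank (ZMod 2) C = k ∧ IsMinDist C d}

/-- `d_so(n,k)`: the largest minimum distance among binary self-orthogonal `[n,k]` codes. -/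
noncomputable def dSO (n k : ℕ) : ℕ :=
  sSup {d | ∃ C : Submodule (ZMod 2) (Fin n → ZMod 2),
    IsSO C ∧ Module.finrank (ZMod 2) C = k ∧ IsMinDist C d}

/-!
Appending to every codeword `c` of a self-orthogonal `[n, 5, d]` code the simplex codeword of
the coordinate vector of `c` gives a self-orthogonal `[n + 31, 5, d + 16]` code: the simplex code
is self-orthogonal and all its nonzero words have weight 16. Starting from `[45, 5, 22]` this
reaches `[31m + 14, 5, 16m + 6]`. Conversely, the binary Griesmer bound
`n ≥ ∑ i < k, ⌈d / 2 ^ i⌉`, proved by induction on `k` through the residual code of a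
minimum-weight word, gives `n ≥ 31m + 15` for `d = 16m + 7`, so both suprema equal `16m + 6`.
-/

open Finset Matrix Module

section Residual

variable {ι β : Type*} [Fintype ι] [Zero β] [DecidableEq β]

theorem hammingNorm_restrict_eq (c x : ι → β) :
    hammingNorm (fun i : {i // x i = 0} => c i) = #{i | x i = 0 ∧ c i ≠ 0} := by
  rw [hammingNorm, ← Fintype.card_subtype, ← Fintype.card_subtype]
  exact Fintype.card_congr
    (Equiv.subtypeSubtypeEquivSubtypeInter (fun i => x i = 0) (fun i => c i ≠ 0))

theorem hammingNorm_add_hammingNorm_add (c x : ι → ZMod 2) :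
    hammingNorm c + hammingNorm (c + x) =
      hammingNorm x + 2 * hammingNorm (fun i : {i // x i = 0} => c i) := by
  rw [hammingNorm_restrict_eq]
  simp only [hammingNorm, card_filter, mul_sum, ← sum_add_distrib, Pi.add_apply]
  exact sum_congr rfl fun i _ => by
    generalize c i = a, x i = b
    fin_cases a <;> fin_cases b <;> rfl

theorem card_subtype_eq_zero_add_hammingNorm (x : ι → β) :
    Fintype.card {i // x i = 0} + hammingNorm x = Fintype.card ι := by
  rw [hammingNorm, Fintype.card_subtype]
  exact card_filter_add_card_filter_not _

def residualCode (C : Submodule (ZMod 2) (ι → ZMod 2)) (x : ι → ZMod 2) :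
    Submodule (ZMod 2) ({i // x i = 0} → ZMod 2) :=
  C.map (LinearMap.funLeft (ZMod 2) (ZMod 2) Subtype.val)

variable {C : Submodule (ZMod 2) (ι → ZMod 2)} {x : ι → ZMod 2}
  (hx : x ∈ C) (hmin : ∀ c ∈ C, c ≠ 0 → hammingNorm x ≤ hammingNorm c)
include hx hmin

theorem eq_zero_or_eq_of_restrict_eq_zero (hx0 : x ≠ 0) {c : ι → ZMod 2} (hc : c ∈ C)
    (hres : (fun i : {i // x i = 0} => c i) = 0) : c = 0 ∨ c = x := by
  by_contra! hne
  have hcx : c + x ≠ 0 := by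
    rw [Ne, ← ZModModule.sub_eq_add, sub_eq_zero]
    exact hne.2
  have hsum := hammingNorm_add_hammingNorm_add c x
  rw [hres, hammingNorm_zero] at hsum
  have := hmin c hc hne.1
  have := hmin (c + x) (C.add_mem hc hx) hcx
  exact hx0 (hammingNorm_eq_zero.mp (by omega))

theorem finrank_residualCode_add_one (hx0 : x ≠ 0) :
    finrank (ZMod 2) (residualCode C x) + 1 = finrank (ZMod 2) C := by
  set ρ :=
    (LinearMap.funLeft (ZMod 2) (ZMod 2) (Subtype.val : {i // x i = 0} → ι)).domRestrict C
  have hker : LinearMap.ker ρ = (ZMod 2) ∙ (⟨x, hx⟩ : C) := by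
    refine le_antisymm (fun c hc => ?_) ?_
    · rcases eq_zero_or_eq_of_restrict_eq_zero hx hmin hx0 c.2 hc with h | h
      · rw [show c = 0 from Submodule.coe_eq_zero.mp h]
        exact Submodule.zero_mem _
      · rw [show c = ⟨x, hx⟩ from Subtype.ext h]
        exact Submodule.mem_span_singleton_self _
    · rw [Submodule.span_singleton_le_iff_mem]
      exact funext fun i => i.2
  have hrank := LinearMap.finrank_range_add_finrank_ker ρ
  rwa [LinearMap.range_domRestrict, hker,
    finrank_span_singleton (by simpa [Submodule.mk_eq_zero] using hx0)] at hrank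

theorem le_hammingNorm_of_mem_residualCode {y : {i // x i = 0} → ZMod 2}
    (hy : y ∈ residualCode C x) (hy0 : y ≠ 0) : (hammingNorm x + 1) / 2 ≤ hammingNorm y := by
  obtain ⟨c, hc, rfl⟩ := Submodule.mem_map.mp hy
  have hc0 : c ≠ 0 := by
    rintro rfl
    exact hy0 (map_zero _)
  have hcx0 : c + x ≠ 0 := by
    rintro hcx
    rw [← ZModModule.sub_eq_add, sub_eq_zero] at hcx
    exact hy0 (funext fun i => by simp [hcx, i.2])
  have hsum := hammingNorm_add_hammingNorm_add c x
  have := hmin c hc hc0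
  have := hmin (c + x) (C.add_mem hc hx) hcx0
  change (hammingNorm x + 1) / 2 ≤ hammingNorm (fun i : {i // x i = 0} => c i)
  omega

end Residual

/-- `griesmerLength k d = ∑ i < k, ⌈d / 2 ^ i⌉`. -/
def griesmerLength : ℕ → ℕ → ℕ
  | 0, _ => 0
  | k + 1, d => d + griesmerLength k ((d + 1) / 2)

theorem griesmerLength_mono (k : ℕ) : Monotone (griesmerLength k) := by
  induction k with
  | zero => exact fun _ _ _ => le_rfl
  | succ k ih => exact fun d d' h => Nat.add_le_add h (ih (Nat.div_le_div_right (by omega)))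

theorem griesmerLength_le_card {ι : Type*} [Fintype ι] (C : Submodule (ZMod 2) (ι → ZMod 2))
    {k d : ℕ} (hk : finrank (ZMod 2) C = k) (hd : ∀ c ∈ C, c ≠ 0 → d ≤ hammingNorm c) :
    griesmerLength k d ≤ Fintype.card ι := by
  induction k generalizing ι d with
  | zero => exact Nat.zero_le _
  | succ k ih =>
    have hne : ((C : Set (ι → ZMod 2)) \ {0}).Nonempty := by
      obtain ⟨x, hx, hx0⟩ := Submodule.exists_mem_ne_zero_of_ne_bot
        (fun h : C = ⊥ => by rw [h, finrank_bot] at hk; omega)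
      exact ⟨x, hx, hx0⟩
    obtain ⟨x, ⟨hx, hx0⟩, hmin⟩ := Set.exists_min_image _ hammingNorm (Set.toFinite _) hne
    have hmin' : ∀ c ∈ C, c ≠ 0 → hammingNorm x ≤ hammingNorm c :=
      fun c hc hc0 => hmin c ⟨hc, hc0⟩
    have hdx := hd x hx hx0
    have hres := ih (residualCode C x)
      (by have := finrank_residualCode_add_one hx hmin' hx0; omega)
      (fun y hy hy0 => le_hammingNorm_of_mem_residualCode hx hmin' hy hy0)
    have hcard := card_subtype_eq_zero_add_hammingNorm x
    have hmono := griesmerLength_mono k (Nat.div_le_div_right (c := 2) (Nat.add_le_add_right hdx 1))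
    change d + griesmerLength k ((d + 1) / 2) ≤ _
    omega

theorem le_of_isMinDist_of_card_lt_griesmerLength {n k d e : ℕ}
    {C : Submodule (ZMod 2) (Fin n → ZMod 2)} (hk : finrank (ZMod 2) C = k) (hd : IsMinDist C d)
    (hn : n < griesmerLength k (e + 1)) : d ≤ e := by
  by_contra! hlt
  have := griesmerLength_le_card C hk hd.2
  have := griesmerLength_mono k (show e + 1 ≤ d by omega)
  rw [Fintype.card_fin] at *
  omega

section Append

variable {R : Type*} {n r : ℕ}

def appendLinearMap [Semiring R] :
    ((Fin n → R) × (Fin r → R)) →ₗ[R] (Fin (n + r) → R) where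
  toFun p := Fin.append p.1 p.2
  map_add' p q := funext fun i => Fin.addCases (by simp) (by simp) i
  map_smul' a p := funext fun i => Fin.addCases (by simp) (by simp) i

theorem hammingNorm_append [Zero R] [DecidableEq R] (x : Fin n → R) (y : Fin r → R) :
    hammingNorm (Fin.append x y) = hammingNorm x + hammingNorm y := by
  simp only [hammingNorm, card_filter, Fin.sum_univ_add, Fin.append_left, Fin.append_right]

theorem append_dotProduct_append [Mul R] [AddCommMonoid R] (x x' : Fin n → R)
    (y y' : Fin r → R) :
    Fin.append x y ⬝ᵥ Fin.append x' y' = x ⬝ᵥ x' + y ⬝ᵥ y' := by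
  simp only [dotProduct, Fin.sum_univ_add, Fin.append_left, Fin.append_right]

end Append

section Extension

variable {n r k e : ℕ} {G : Matrix (Fin r) (Fin k) (ZMod 2)} (hG : Gᵀ * G = 0)
  (hwt : ∀ u, u ≠ 0 → hammingNorm (G *ᵥ u) = e)
include hG hwt

theorem exists_isSO_isMinDist_append {C : Submodule (ZMod 2) (Fin n → ZMod 2)} {d : ℕ}
    (hso : IsSO C) (hk : finrank (ZMod 2) C = k) (hd : IsMinDist C d) :
    ∃ C' : Submodule (ZMod 2) (Fin (n + r) → ZMod 2),
      IsSO C' ∧ finrank (ZMod 2) C' = k ∧ IsMinDist C' (d + e) := by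
  set coords := (Module.finBasisOfFinrankEq (ZMod 2) C hk).equivFun
  set φ : C →ₗ[ZMod 2] (Fin (n + r) → ZMod 2) :=
    appendLinearMap ∘ₗ C.subtype.prod (G.mulVecLin ∘ₗ coords.toLinearMap)
  have hφ (c : C) : φ c = Fin.append (c : Fin n → ZMod 2) (G *ᵥ coords c) := rfl
  have hinj : Function.Injective φ := fun c c' h => Subtype.ext <| funext fun i => by
    simpa [hφ] using congrFun h (Fin.castAdd r i)
  have hwtφ (c : C) (hc : c ≠ 0) :
      hammingNorm (φ c) = hammingNorm (c : Fin n → ZMod 2) + e := by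
    rw [hφ, hammingNorm_append, hwt _ (coords.map_ne_zero_iff.mpr hc)]
  refine ⟨LinearMap.range φ, ?_, ?_, ?_, ?_⟩
  · rintro _ ⟨c, rfl⟩ _ ⟨c', rfl⟩
    change φ c ⬝ᵥ φ c' = 0
    rw [hφ, hφ, append_dotProduct_append, dotProduct_mulVec, ← vecMul_transpose, vecMul_vecMul,
      hG, vecMul_zero, zero_dotProduct, add_zero]
    exact hso c c.2 c' c'.2
  · rw [LinearMap.finrank_range_of_inj hinj, hk]
  · obtain ⟨x, hx, hx0, hxd⟩ := hd.1
    have hx0' : (⟨x, hx⟩ : C) ≠ 0 := by simpa [Submodule.mk_eq_zero] using hx0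
    refine ⟨φ ⟨x, hx⟩, LinearMap.mem_range_self _ _,
      (map_ne_zero_iff φ hinj).mpr hx0', ?_⟩
    rw [hwtφ _ hx0', hxd]
  · rintro _ ⟨c, rfl⟩ hc
    have hc0 : c ≠ 0 := by
      rintro rfl
      exact hc (map_zero φ)
    have := hd.2 c c.2 (by simpa using hc0)
    rw [hwtφ c hc0]
    omega

theorem exists_isSO_isMinDist_append_iterate {C : Submodule (ZMod 2) (Fin n → ZMod 2)} {d : ℕ}
    (hso : IsSO C) (hk : finrank (ZMod 2) C = k) (hd : IsMinDist C d) (m : ℕ) :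
    ∃ C' : Submodule (ZMod 2) (Fin (n + r * m) → ZMod 2),
      IsSO C' ∧ finrank (ZMod 2) C' = k ∧ IsMinDist C' (d + e * m) := by
  induction m with
  | zero => exact ⟨C, hso, hk, hd⟩
  | succ m ih =>
    obtain ⟨C', hso', hk', hd'⟩ := ih
    rw [Nat.mul_succ, Nat.mul_succ, ← Nat.add_assoc, ← Nat.add_assoc]
    exact exists_isSO_isMinDist_append hG hwt hso' hk' hd'

end Extension

/-- Row `j` is the binary expansion of `j + 1`, so the rows run over the nonzero vectors of
`F₂⁵` and `u ↦ simplexMatrix *ᵥ u` encodes the `[31, 5, 16]` simplex code. -/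
def simplexMatrix : Matrix (Fin 31) (Fin 5) (ZMod 2) :=
  Matrix.of fun j i => if (j.val + 1).testBit i then 1 else 0

theorem simplexMatrix_transpose_mul_self : simplexMatrixᵀ * simplexMatrix = 0 := by
  decide

theorem hammingNorm_simplexMatrix_mulVec {u : Fin 5 → ZMod 2} (hu : u ≠ 0) :
    hammingNorm (simplexMatrix *ᵥ u) = 16 := by
  revert u
  decide

/-- If there exists a binary self-orthogonal `[45, 5, 22]` code, then for every `m ≥ 1`
there exists a binary self-orthogonal `[31m + 14, 5, 16m + 6]` code; combined with the
Griesmer bound, `d_so(31m + 14, 5) = d(31m + 14, 5) = 16m + 6`. -/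
theorem dso_31m14 
    (h : ∃ C : Submodule (ZMod 2) (Fin 45 → ZMod 2),
      IsSO C ∧ Module.finrank (ZMod 2) C = 5 ∧ IsMinDist C 22) :
    ∀ m : ℕ, 1 ≤ m →
      (∃ C : Submodule (ZMod 2) (Fin (31 * m + 14) → ZMod 2),
        IsSO C ∧ Module.finrank (ZMod 2) C = 5 ∧ IsMinDist C (16 * m + 6)) ∧
      dSO (31 * m + 14) 5 = 16 * m + 6 ∧ dLin (31 * m + 14) 5 = 16 * m + 6 := by
  intro m hm
  have hcode : ∃ C : Submodule (ZMod 2) (Fin (31 * m + 14) → ZMod 2),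
      IsSO C ∧ finrank (ZMod 2) C = 5 ∧ IsMinDist C (16 * m + 6) := by
    obtain ⟨m, rfl⟩ := Nat.exists_eq_add_of_le' hm
    obtain ⟨C, hso, hk, hd⟩ := h
    rw [show 31 * (m + 1) + 14 = 45 + 31 * m by ring,
      show 16 * (m + 1) + 6 = 22 + 16 * m by ring]
    exact exists_isSO_isMinDist_append_iterate simplexMatrix_transpose_mul_self
      (fun _ => hammingNorm_simplexMatrix_mulVec) hso hk hd m
  have hgriesmer {C : Submodule (ZMod 2) (Fin (31 * m + 14) → ZMod 2)} {d : ℕ}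
      (hk : finrank (ZMod 2) C = 5) (hd : IsMinDist C d) : d ≤ 16 * m + 6 :=
    le_of_isMinDist_of_card_lt_griesmerLength hk hd (by simp only [griesmerLength]; omega)
  obtain ⟨C, hso, hk, hd⟩ := hcode
  refine ⟨⟨C, hso, hk, hd⟩, IsGreatest.csSup_eq ⟨⟨C, hso, hk, hd⟩, ?_⟩,
    IsGreatest.csSup_eq ⟨⟨C, hk, hd⟩, ?_⟩⟩
  · rintro d ⟨C', -, hk', hd'⟩
    exact hgriesmer hk' hd'
  · rintro d ⟨C', hk', hd'⟩
    exact hgriesmer hk' hd'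
end

section
/- For m ≥ 1 and n = 63m + 6, the maximum d permitted by the Griesmer bound for binary [n, 6, d] codes is d = 32m + 1; consequently, since the m-fold repetition of the simplex code gives a self-orthogonal [63m, 6, 32m] code and d_{so} is even and monotone in n, d_{so}(63m + r, 6) = 32m = 2⌊d(63m + r, 6)/2⌋ for all 0 ≤ r ≤ 6. -/
open Finset

section Weight

variable {ι : Type*} [Fintype ι]

theorem hammingNorm_add_add_two_mul_hammingNorm_mul (x y : ι → ZMod 2) :
    hammingNorm (x + y) + 2 * hammingNorm (x * y) = hammingNorm x + hammingNorm y := by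
  simp only [hammingNorm, card_filter, Pi.add_apply, Pi.mul_apply, mul_sum, ← sum_add_distrib]
  refine sum_congr rfl fun i _ => ?_
  generalize x i = a; generalize y i = b
  fin_cases a <;> fin_cases b <;> rfl

theorem sum_eq_hammingNorm (x : ι → ZMod 2) : ∑ i, x i = (hammingNorm x : ZMod 2) := by
  rw [hammingNorm, card_filter, Nat.cast_sum]
  refine sum_congr rfl fun i _ => ?_
  generalize x i = a
  fin_cases a <;> rfl

theorem hammingNorm_restrict (p : ι → Prop) [DecidablePred p] (x : ι → ZMod 2) :
    hammingNorm (fun j : {i // p i} => x j) = #{i | p i ∧ x i ≠ 0} := by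
  simp only [hammingNorm, ← Fintype.card_subtype]
  exact Fintype.card_congr (Equiv.subtypeSubtypeEquivSubtypeInter p (fun i => x i ≠ 0))

end Weight

section Griesmer

variable {ι : Type*}

-- `C.map (residualMap c)` is the residual code of `C` with respect to `c`.
def residualMap (c : ι → ZMod 2) : (ι → ZMod 2) →ₗ[ZMod 2] ({i // c i = 0} → ZMod 2) :=
  LinearMap.funLeft (ZMod 2) (ZMod 2) Subtype.val

theorem residualMap_self (c : ι → ZMod 2) : residualMap c c = 0 :=
  funext fun j => j.2

variable [Fintype ι]

theorem hammingNorm_residualMap (c x : ι → ZMod 2) :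
    hammingNorm x + hammingNorm (x + c) = hammingNorm c + 2 * hammingNorm (residualMap c x) := by
  have hcancel : x + (x + c) = c := by
    ext i
    exact CharTwo.add_cancel_left (x i) (c i)
  have hsupp : hammingNorm (x * (x + c)) = hammingNorm (residualMap c x) := by
    rw [show residualMap c x = fun j : {i // c i = 0} => x j from rfl, hammingNorm_restrict]
    refine congrArg card (filter_congr fun i _ => ?_)
    have key : ∀ a b : ZMod 2, a * (a + b) ≠ 0 ↔ b = 0 ∧ a ≠ 0 := by decide
    exact key (x i) (c i)
  rw [← hammingNorm_add_add_two_mul_hammingNorm_mul, hcancel, hsupp]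

theorem card_zeroSet_add_hammingNorm (c : ι → ZMod 2) :
    Fintype.card {i // c i = 0} + hammingNorm c = Fintype.card ι := by
  rw [Fintype.card_subtype, hammingNorm, card_filter_add_card_filter_not, card_univ]

variable {C : Submodule (ZMod 2) (ι → ZMod 2)} {c : ι → ZMod 2}

theorem exists_min_hammingNorm (hC : C ≠ ⊥) :
    ∃ c ∈ C, c ≠ 0 ∧ ∀ y ∈ C, y ≠ 0 → hammingNorm c ≤ hammingNorm y := by
  obtain ⟨c, ⟨hc, hc0⟩, hmin⟩ := Set.exists_min_image {y | y ∈ C ∧ y ≠ 0} hammingNorm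
    (Set.toFinite _) ((Submodule.ne_bot_iff C).1 hC)
  exact ⟨c, hc, hc0, fun y hy hy0 => hmin y ⟨hy, hy0⟩⟩

variable (hc : c ∈ C) (hmin : ∀ y ∈ C, y ≠ 0 → hammingNorm c ≤ hammingNorm y)
include hc hmin

theorem hammingNorm_le_two_mul_hammingNorm_residualMap {x : ι → ZMod 2} (hx : x ∈ C)
    (hx0 : x ≠ 0) (hxc : x ≠ c) : hammingNorm c ≤ 2 * hammingNorm (residualMap c x) := by
  have hxc' : x + c ≠ 0 := fun h => hxc (funext fun i => CharTwo.add_eq_zero.1 (congrFun h i))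
  have := hmin x hx hx0
  have := hmin (x + c) (C.add_mem hx hc) hxc'
  have := hammingNorm_residualMap c x
  omega

theorem eq_zero_or_eq_of_residualMap_eq_zero (hc0 : c ≠ 0) {x : ι → ZMod 2} (hx : x ∈ C)
    (hres : residualMap c x = 0) : x = 0 ∨ x = c := by
  by_contra! h
  have := hammingNorm_le_two_mul_hammingNorm_residualMap hc hmin hx h.1 h.2
  rw [hres, hammingNorm_zero, mul_zero, Nat.le_zero, hammingNorm_eq_zero] at this
  exact hc0 this

theorem finrank_map_residualMap_add_one (hc0 : c ≠ 0) :
    Module.finrank (ZMod 2) (C.map (residualMap c)) + 1 = Module.finrank (ZMod 2) C := by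
  have hker : LinearMap.ker ((residualMap c).domRestrict C) = (ZMod 2) ∙ ⟨c, hc⟩ := by
    refine le_antisymm (fun x hx => ?_) ?_
    · rcases eq_zero_or_eq_of_residualMap_eq_zero hc hmin hc0 x.2 hx with h | h
      · rw [show x = 0 from Subtype.ext h]
        exact zero_mem _
      · rw [show x = ⟨c, hc⟩ from Subtype.ext h]
        exact Submodule.mem_span_singleton_self _
    · rw [Submodule.span_le, Set.singleton_subset_iff]
      exact residualMap_self c
  have hc0' : (⟨c, hc⟩ : C) ≠ 0 := fun h => hc0 (congrArg Subtype.val h)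
  rw [← LinearMap.finrank_range_add_finrank_ker ((residualMap c).domRestrict C),
    LinearMap.range_domRestrict, hker, finrank_span_singleton hc0']

theorem hammingNorm_le_of_mem_map_residualMap {y : {i // c i = 0} → ZMod 2}
    (hy : y ∈ C.map (residualMap c)) (hy0 : y ≠ 0) : (hammingNorm c + 1) / 2 ≤ hammingNorm y := by
  obtain ⟨x, hx, rfl⟩ := hy
  have hx0 : x ≠ 0 := by rintro rfl; exact hy0 (map_zero _)
  have hxc : x ≠ c := by rintro rfl; exact hy0 (residualMap_self _)
  have := hammingNorm_le_two_mul_hammingNorm_residualMap hc hmin hx hx0 hxc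
  omega

end Griesmer

-- `(a + b - 1) / b` is `⌈a / b⌉`: this says `⌈⌈w / 2⌉ / 2 ^ i⌉ = ⌈w / 2 ^ (i + 1)⌉`.
theorem ceilDiv_two_ceilDiv_two_pow (w i : ℕ) :
    ((w + 1) / 2 + 2 ^ i - 1) / 2 ^ i = (w + 2 ^ (i + 1) - 1) / 2 ^ (i + 1) := by
  have hpos : 1 ≤ 2 ^ i := Nat.one_le_two_pow
  have : w + 2 ^ (i + 1) - 1 = (w + 1) + 2 * (2 ^ i - 1) := by rw [pow_succ]; omega
  rw [this, pow_succ', ← Nat.div_div_eq_div_mul, Nat.add_mul_div_left _ _ two_pos]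
  congr 1
  omega

theorem griesmer_bound {ι : Type*} [Fintype ι] (C : Submodule (ZMod 2) (ι → ZMod 2)) {d : ℕ}
    (hd : ∀ x ∈ C, x ≠ 0 → d ≤ hammingNorm x) :
    ∑ i ∈ range (Module.finrank (ZMod 2) C), (d + 2 ^ i - 1) / 2 ^ i ≤ Fintype.card ι := by
  induction hk : Module.finrank (ZMod 2) C generalizing ι C d with
  | zero => simp
  | succ k ih =>
    have hC : C ≠ ⊥ := by rintro rfl; simp at hk
    obtain ⟨c, hc, hc0, hmin⟩ := exists_min_hammingNorm hC
    have hres := ih (C.map (residualMap c)) (fun y => hammingNorm_le_of_mem_map_residualMap hc hmin)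
      (by have := finrank_map_residualMap_add_one hc hmin hc0; omega)
    have hdc : d ≤ hammingNorm c := hd c hc hc0
    calc ∑ i ∈ range (k + 1), (d + 2 ^ i - 1) / 2 ^ i
        ≤ ∑ i ∈ range (k + 1), (hammingNorm c + 2 ^ i - 1) / 2 ^ i :=
          sum_le_sum fun i _ => Nat.div_le_div_right (by omega)
      _ = hammingNorm c + ∑ i ∈ range k, ((hammingNorm c + 1) / 2 + 2 ^ i - 1) / 2 ^ i := by
          simp only [sum_range_succ', ceilDiv_two_ceilDiv_two_pow, pow_zero, add_tsub_cancel_right,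
            Nat.div_one]
          ring
      _ ≤ Fintype.card ι := by
          have := card_zeroSet_add_hammingNorm c
          omega

theorem two_mul_card_filter_ne_zero {V : Type*} [AddGroup V] [Fintype V] [DecidableEq V]
    (f : V →+ ZMod 2) (hf : f ≠ 0) : 2 * #{x | f x ≠ 0} = Fintype.card V := by
  obtain ⟨x₀, hx₀⟩ := DFunLike.ne_iff.1 hf
  have hswap : #{x | f x = 0} = #{x | f x ≠ 0} := by
    refine card_nbij' (· + x₀) (· - x₀) (fun x hx => ?_) (fun x hx => ?_)
      (fun x _ => add_sub_cancel_right x x₀) (fun x _ => sub_add_cancel x x₀)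
    · simp_all
    · simp only [coe_filter, mem_univ, true_and, Set.mem_ofPred_eq, map_sub] at hx ⊢
      exact (by decide : ∀ a b : ZMod 2, a ≠ 0 → b ≠ 0 → a - b = 0) _ _ hx hx₀
  have hsplit := card_filter_add_card_filter_not (s := univ) (fun x => f x ≠ 0)
  simp only [not_not, card_univ] at hsplit
  omega

theorem card_filter_extend_zero {α β γ : Type*} [Fintype α] [Fintype β] [DecidableEq β]
    [Zero γ] (e : α ↪ β) (g : α → γ) {p : γ → Prop} [DecidablePred p] (hp : ¬ p 0) :
    #{b | p (Function.extend e g 0 b)} = #{a | p (g a)} := by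
  rw [← card_map e]
  congr 1
  ext b
  simp only [mem_filter, mem_univ, true_and, mem_map]
  by_cases hb : ∃ a, e a = b
  · obtain ⟨a, rfl⟩ := hb
    simp [e.injective.extend_apply, e.injective.eq_iff]
  · rw [Function.extend_apply' _ _ _ hb]
    exact iff_of_false hp fun ⟨a, _, ha⟩ => hb ⟨a, ha⟩

-- The columns: every nonzero vector of `𝔽₂ᵏ` taken `m` times (the `m`-fold simplex code), then zeros.
theorem exists_columns_card_dotProduct_ne_zero (k m n : ℕ) (hn : m * (2 ^ k - 1) ≤ n) :
    ∃ col : Fin n → Fin k → ZMod 2,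
      ∀ v ≠ 0, 2 * #{j | col j ⬝ᵥ v ≠ 0} = m * 2 ^ k := by
  let W := {w : Fin k → ZMod 2 // w ≠ 0}
  have hcard : Fintype.card (W × Fin m) ≤ Fintype.card (Fin n) := by
    simpa [W, Fintype.card_fun, mul_comm] using hn
  obtain ⟨e⟩ := Function.Embedding.nonempty_of_card_le hcard
  refine ⟨Function.extend e (fun p => p.1.1) 0, fun v hv => ?_⟩
  let f : (Fin k → ZMod 2) →+ ZMod 2 := AddMonoidHom.mk' (· ⬝ᵥ v) (fun a b => add_dotProduct a b v)
  have hf : f ≠ 0 := by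
    obtain ⟨i, hi⟩ := Function.ne_iff.1 hv
    exact DFunLike.ne_iff.2 ⟨Pi.single i 1, by simpa [f] using hi⟩
  have hcount : #{p : W × Fin m | p.1.1 ⬝ᵥ v ≠ 0} = m * #{w | f w ≠ 0} := by
    simp only [← Fintype.card_subtype]
    rw [Fintype.card_congr (Equiv.prodSubtypeFstEquivSubtypeProd (p := fun w : W => w.1 ⬝ᵥ v ≠ 0)),
      Fintype.card_prod, Fintype.card_fin, mul_comm]
    congr 1
    exact Fintype.card_congr (Equiv.subtypeSubtypeEquivSubtype (p := (· ≠ 0)) (q := (f · ≠ 0))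
      fun hw h0 => hw (by simp [h0]))
  rw [card_filter_extend_zero e _ (p := (· ⬝ᵥ v ≠ 0)) (by simp), hcount, mul_left_comm,
    two_mul_card_filter_ne_zero f hf]
  simp

section SelfOrthogonal

variable {n : ℕ} {C : Submodule (ZMod 2) (Fin n → ZMod 2)}

theorem isSO_of_four_dvd_hammingNorm (hC : ∀ x ∈ C, 4 ∣ hammingNorm x) : IsSO C := by
  intro x hx y hy
  have hxy := hammingNorm_add_add_two_mul_hammingNorm_mul x y
  have h4x := hC x hx
  have h4y := hC y hy
  have h4xy := hC (x + y) (C.add_mem hx hy)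
  have h2 : 2 ∣ hammingNorm (x * y) := by omega
  rw [show ∑ i, x i * y i = ∑ i, (x * y) i from rfl, sum_eq_hammingNorm,
    (ZMod.natCast_eq_zero_iff _ 2).2 h2]

theorem two_dvd_of_isSO_of_isMinDist {d : ℕ} (hSO : IsSO C) (hd : IsMinDist C d) : 2 ∣ d := by
  obtain ⟨x, hx, -, rfl⟩ := hd.1
  have hsq : x * x = x := funext fun i => (by decide : ∀ a : ZMod 2, a * a = a) (x i)
  have := hSO x hx x hx
  rwa [show ∑ i, x i * x i = ∑ i, (x * x) i from rfl, sum_eq_hammingNorm, hsq,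
    ZMod.natCast_eq_zero_iff] at this

theorem isMinDist_of_hammingNorm_eq {d : ℕ} (hC : C ≠ ⊥)
    (hwt : ∀ x ∈ C, x ≠ 0 → hammingNorm x = d) : IsMinDist C d := by
  obtain ⟨x, hx, hx0⟩ := (Submodule.ne_bot_iff C).1 hC
  exact ⟨⟨x, hx, hx0, hwt x hx hx0⟩, fun y hy hy0 => (hwt y hy hy0).ge⟩

end SelfOrthogonal

theorem exists_finrank_eq_hammingNorm_eq (k m n : ℕ) (hk : 1 ≤ k) (hm : 1 ≤ m)
    (hn : m * (2 ^ k - 1) ≤ n) :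
    ∃ C : Submodule (ZMod 2) (Fin n → ZMod 2), Module.finrank (ZMod 2) C = k ∧
      ∀ x ∈ C, x ≠ 0 → hammingNorm x = m * 2 ^ (k - 1) := by
  obtain ⟨col, hcol⟩ := exists_columns_card_dotProduct_ne_zero k m n hn
  let G := Matrix.mulVecLin (Matrix.of col)
  have hwt : ∀ v ≠ 0, hammingNorm (G v) = m * 2 ^ (k - 1) := by
    intro v hv
    have h2 : 2 ^ k = 2 * 2 ^ (k - 1) := by rw [← pow_succ']; congr 1; omega
    show #{j | col j ⬝ᵥ v ≠ 0} = _
    exact Nat.eq_of_mul_eq_mul_left two_pos ((hcol v hv).trans (by rw [h2]; ring))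
  have hinj : Function.Injective G := by
    refine (injective_iff_map_eq_zero G).2 fun v hv => by_contra fun hv0 => ?_
    have := hwt v hv0
    rw [hv, hammingNorm_zero] at this
    have : 0 < m * 2 ^ (k - 1) := by positivity
    omega
  refine ⟨LinearMap.range G, ?_, ?_⟩
  · rw [LinearMap.finrank_range_of_inj hinj, Module.finrank_fin_fun]
  · rintro x ⟨v, rfl⟩ hx
    exact hwt v (by rintro rfl; exact hx (map_zero G))

theorem exists_isSO_isMinDist_of_mul_two_pow_sub_one_le (k m n : ℕ) (hk : 3 ≤ k) (hm : 1 ≤ m)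
    (hn : m * (2 ^ k - 1) ≤ n) :
    ∃ C : Submodule (ZMod 2) (Fin n → ZMod 2),
      IsSO C ∧ Module.finrank (ZMod 2) C = k ∧ IsMinDist C (m * 2 ^ (k - 1)) := by
  obtain ⟨C, hrank, hwt⟩ := exists_finrank_eq_hammingNorm_eq k m n (by omega) hm hn
  have hC : C ≠ ⊥ := by rintro rfl; rw [finrank_bot] at hrank; omega
  refine ⟨C, isSO_of_four_dvd_hammingNorm fun x hx => ?_, hrank, isMinDist_of_hammingNorm_eq hC hwt⟩
  by_cases hx0 : x = 0
  · simp [hx0]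
  · rw [hwt x hx hx0, show k - 1 = k - 3 + 2 by omega, pow_add]
    exact Dvd.intro (m * 2 ^ (k - 3)) (by ring)

theorem le_of_isMinDist_of_finrank_eq_six {m r d : ℕ} (hr : r ≤ 6)
    {C : Submodule (ZMod 2) (Fin (63 * m + r) → ZMod 2)} (hk : Module.finrank (ZMod 2) C = 6)
    (hd : IsMinDist C d) : d ≤ 32 * m + 1 := by
  have := griesmer_bound C hd.2
  rw [hk, Fintype.card_fin] at this
  simp only [sum_range_succ, sum_range_zero] at this
  norm_num at this
  omega

/-- For `m ≥ 1` and `n = 63m + 6`, the Griesmer bound for binary `[n,6,d]` codes permits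
at most `d = 32m + 1`; since the `m`-fold repeated simplex code is a self-orthogonal
`[63m, 6, 32m]` code and `d_so` is even and monotone in `n`, we get
`d_so(63m + r, 6) = 32m = 2⌊d(63m + r, 6)/2⌋` for all `0 ≤ r ≤ 6`. -/
theorem dso_63m_r (m : ℕ) (hm : 1 ≤ m) :
    ((∑ i ∈ Finset.range 6, (32 * m + 1 + 2 ^ i - 1) / 2 ^ i ≤ 63 * m + 6) ∧
      (63 * m + 6 < ∑ i ∈ Finset.range 6, (32 * m + 2 + 2 ^ i - 1) / 2 ^ i)) ∧
    (∃ C : Submodule (ZMod 2) (Fin (63 * m) → ZMod 2),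
      IsSO C ∧ Module.finrank (ZMod 2) C = 6 ∧ IsMinDist C (32 * m)) ∧
    ∀ r ≤ 6, dSO (63 * m + r) 6 = 32 * m ∧
      dSO (63 * m + r) 6 = 2 * (dLin (63 * m + r) 6 / 2) := by
  have hcode (r : ℕ) : ∃ C : Submodule (ZMod 2) (Fin (63 * m + r) → ZMod 2),
      IsSO C ∧ Module.finrank (ZMod 2) C = 6 ∧ IsMinDist C (32 * m) := by
    simpa [mul_comm] using
      exists_isSO_isMinDist_of_mul_two_pow_sub_one_le 6 m (63 * m + r) (by norm_num) hm (by omega)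
  refine ⟨⟨?_, ?_⟩, hcode 0, fun r hr => ?_⟩
  · simp only [sum_range_succ, sum_range_zero]; norm_num; omega
  · simp only [sum_range_succ, sum_range_zero]; norm_num; omega
  have hSO : dSO (63 * m + r) 6 = 32 * m := by
    refine IsGreatest.csSup_eq ⟨hcode r, ?_⟩
    rintro d ⟨C, hC, hk, hd⟩
    have := le_of_isMinDist_of_finrank_eq_six hr hk hd
    have := two_dvd_of_isSO_of_isMinDist hC hd
    omega
  obtain ⟨C, -, hk, hd⟩ := hcode r
  have hlo : 32 * m ≤ dLin (63 * m + r) 6 :=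
    le_csSup ⟨_, fun d ⟨_, hk, hd⟩ => le_of_isMinDist_of_finrank_eq_six hr hk hd⟩ ⟨C, hk, hd⟩
  have hhi : dLin (63 * m + r) 6 ≤ 32 * m + 1 :=
    csSup_le ⟨_, C, hk, hd⟩ fun d ⟨_, hk, hd⟩ => le_of_isMinDist_of_finrank_eq_six hr hk hd
  omega
end
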